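/- Let n ≥ 2, let s : Fin n → ℝ be injective, let ỹ : Fin n → ℝ be a bijection onto {1, 2, …, n}, let σ > 0, and define ρ = 12·(Σ_{i=1}^{n} r̂_i ỹ_i − n·((n+1)/2)²)/(n(n² − 1)) with r̂_i = 1 + #{j ≠ i : s_i < s_j}. Then 1 − ρ ≤ (12 / (n(n² − 1))) · Σ_{(i,j) : ỹ_i < ỹ_j} (ỹ_j − ỹ_i) · log₂(1 + exp(−σ(s_i − s_j))), where the sum is over all ordered pairs (i, j) with ỹ_i < ỹ_j. -/

import Mathlib

/-!
Both rank vectors count larger (resp. smaller) entries, so `∑ r̂ᵢ ỹᵢ` and `∑ ỹᵢ²` are sums over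
ordered pairs. Pairing each `(i, j)` with `(j, i)` shows `∑ ỹᵢ² - ∑ r̂ᵢ ỹᵢ = D`, the sum of
`ỹⱼ - ỹᵢ` over the pairs with `ỹᵢ < ỹⱼ` that the scores misorder (`sᵢ < sⱼ`). Since
`∑ ỹᵢ² = n(n+1)(2n+1)/6`, this gives `1 - ρ = 12 D / (n(n² - 1))` exactly, and the logistic
term dominates the indicator of `sᵢ < sⱼ` for `σ ≥ 0`.
-/

open Finset

section PairSums

variable {ι α : Type*} [Fintype ι] [LinearOrder α]

theorem sum_eq_sum_filter_lt_add_swap {M : Type*} [AddCommMonoid M] {g : ι → α}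
    (hg : Function.Injective g) (F : ι × ι → M) (hF : ∀ i, F (i, i) = 0) :
    ∑ p, F p = ∑ p ∈ univ.filter fun p : ι × ι => g p.1 < g p.2, (F p + F p.swap) := by
  have hswap : ∑ p ∈ univ.filter (fun p : ι × ι => g p.2 < g p.1), F p
      = ∑ p ∈ univ.filter (fun p : ι × ι => g p.1 < g p.2), F p.swap :=
    sum_equiv (Equiv.prodComm ι ι) (by simp) (by simp)
  have hdiag : ∑ p ∈ univ.filter (fun p : ι × ι => g p.2 < g p.1), F p
      = ∑ p ∈ univ.filter (fun p : ι × ι => ¬ g p.1 < g p.2), F p := by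
    refine sum_subset (fun p => by simpa using le_of_lt) fun ⟨i, j⟩ hp hp' => ?_
    simp only [mem_filter, mem_univ, true_and, not_lt] at hp hp'
    obtain rfl := hg (le_antisymm hp hp')
    exact hF _
  rw [sum_add_distrib, ← hswap, hdiag, sum_filter_add_sum_filter_not]

theorem sum_card_lt_mul_sub_sum_card_gt_mul {f : ι → α} (hf : Function.Injective f)
    {g : ι → ℝ} (hg : Function.Injective g) :
    ∑ i, (#{j | g j < g i} : ℝ) * g i - ∑ i, (#{j | f i < f j} : ℝ) * g i
      = ∑ p ∈ univ.filter fun p : ι × ι => g p.1 < g p.2,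
          if f p.1 < f p.2 then g p.2 - g p.1 else 0 := by
  have hpairs : ∑ i, (#{j | g j < g i} : ℝ) * g i - ∑ i, (#{j | f i < f j} : ℝ) * g i
      = ∑ p : ι × ι,
          ((if g p.2 < g p.1 then 1 else 0) - (if f p.1 < f p.2 then 1 else 0)) * g p.1 := by
    simp only [natCast_card_filter, sum_mul, ← sum_sub_distrib, Fintype.sum_prod_type, sub_mul]
  rw [hpairs, sum_eq_sum_filter_lt_add_swap hg _ (by simp)]
  refine sum_congr rfl fun ⟨i, j⟩ hij => ?_
  simp only [mem_filter, mem_univ, true_and] at hij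
  rcases (hf.ne (hg.ne_iff.mp hij.ne)).lt_or_gt with h | h <;>
    simp [h, h.not_gt, hij, hij.not_gt, neg_add_eq_sub]

theorem sum_one_add_card_gt_mul_eq {f : ι → α} (hf : Function.Injective f)
    {g : ι → ℝ} (hg : Function.Injective g) (hg_rank : ∀ i, g i = 1 + #{j | g j < g i}) :
    ∑ i, (1 + (#{j | f i < f j} : ℝ)) * g i
      = ∑ i, g i ^ 2 - ∑ p ∈ univ.filter fun p : ι × ι => g p.1 < g p.2,
          if f p.1 < f p.2 then g p.2 - g p.1 else 0 := by
  have hsq : ∑ i, g i ^ 2 = ∑ i, (1 + (#{j | g j < g i} : ℝ)) * g i :=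
    sum_congr rfl fun i _ => by rw [sq]; nth_rw 1 [hg_rank i]
  rw [hsq, ← sum_card_lt_mul_sub_sum_card_gt_mul hf hg]
  simp only [add_mul, one_mul, sum_add_distrib]
  ring

end PairSums

section ShiftedPermutation

variable {n : ℕ} {π : Equiv.Perm (Fin n)} {y : Fin n → ℝ}

theorem card_filter_perm_lt (π : Equiv.Perm (Fin n)) (i : Fin n) :
    #{j | π j < π i} = π i := by
  rw [card_equiv π (t := {k | k < π i}) (by simp), filter_gt_eq_Iio, Fin.card_Iio]

theorem injective_of_eq_perm_add_one (hy : ∀ i, y i = ((π i : ℕ) : ℝ) + 1) :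
    Function.Injective y := fun i j hij =>
  π.injective <| Fin.val_injective <| by simpa [hy] using hij

theorem eq_one_add_card_lt_of_eq_perm_add_one (hy : ∀ i, y i = ((π i : ℕ) : ℝ) + 1) (i : Fin n) :
    y i = 1 + #{j | y j < y i} := by
  have hlt : ∀ j, y j < y i ↔ π j < π i := fun j => by simp [hy]
  simp_rw [hlt, card_filter_perm_lt, hy i, add_comm]

theorem sum_range_add_one_sq (n : ℕ) :
    ∑ k ∈ range n, ((k : ℝ) + 1) ^ 2 = (n : ℝ) * (n + 1) * (2 * n + 1) / 6 := by
  induction n with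
  | zero => simp
  | succ m ih => rw [sum_range_succ, ih]; push_cast; ring

theorem sum_sq_of_eq_perm_add_one (hy : ∀ i, y i = ((π i : ℕ) : ℝ) + 1) :
    ∑ i, y i ^ 2 = (n : ℝ) * (n + 1) * (2 * n + 1) / 6 := by
  simp_rw [hy]
  rw [Equiv.sum_comp π fun k : Fin n => ((k : ℕ) + 1 : ℝ) ^ 2,
    Fin.sum_univ_eq_sum_range (fun k => ((k : ℝ) + 1) ^ 2), sum_range_add_one_sq]

end ShiftedPermutation

theorem ite_le_mul_logb_one_add_exp {σ w : ℝ} (hσ : 0 ≤ σ) (hw : 0 ≤ w) (a b : ℝ) :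
    (if a < b then w else 0) ≤ w * Real.logb 2 (1 + Real.exp (-σ * (a - b))) := by
  split_ifs with hab
  · refine le_mul_of_one_le_right hw ?_
    have hexp : 1 ≤ Real.exp (-σ * (a - b)) := Real.one_le_exp (by nlinarith)
    rw [Real.le_logb_iff_rpow_le one_lt_two (by positivity)]
    rw [Real.rpow_one]
    linarith
  · exact mul_nonneg hw (Real.logb_nonneg one_lt_two (by linarith [Real.exp_pos (-σ * (a - b))]))

/-- Eq. 25: `1 − ρ ≤ l_sg`, the logistic surrogate bound on the RankIC loss. -/
theorem one_sub_rankIC_le_logistic_surrogate (n : ℕ) (hn : 2 ≤ n)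
    (s : Fin n → ℝ) (hs : Function.Injective s) (y : Fin n → ℝ)
    (hy : ∃ σ : Equiv.Perm (Fin n), ∀ i, y i = ((σ i : ℕ) : ℝ) + 1)
    (σ : ℝ) (hσ : 0 < σ) :
    1 - 12 * ((∑ i, (1 + ((univ.filter fun j => j ≠ i ∧ s i < s j).card : ℝ)) * y i)
            - n * (((n : ℝ) + 1) / 2) ^ 2) / (n * ((n : ℝ) ^ 2 - 1))
      ≤ 12 / (n * ((n : ℝ) ^ 2 - 1)) *
          ∑ p ∈ univ.filter fun p : Fin n × Fin n => y p.1 < y p.2,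
            (y p.2 - y p.1) * Real.logb 2 (1 + Real.exp (-σ * (s p.1 - s p.2))) := by
  obtain ⟨π, hπ⟩ := hy
  have hn2 : (2 : ℝ) ≤ n := by exact_mod_cast hn
  have hn1 : 0 < (n : ℝ) ^ 2 - 1 := by nlinarith
  have hfilter : ∀ i, (univ.filter fun j => j ≠ i ∧ s i < s j) = univ.filter fun j => s i < s j :=
    fun i => filter_congr fun j _ => and_iff_right_of_imp fun h => ne_of_apply_ne s h.ne'
  simp_rw [hfilter]
  rw [sum_one_add_card_gt_mul_eq hs (injective_of_eq_perm_add_one hπ)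
    (eq_one_add_card_lt_of_eq_perm_add_one hπ), sum_sq_of_eq_perm_add_one hπ]
  set D := ∑ p ∈ univ.filter fun p : Fin n × Fin n => y p.1 < y p.2,
    if s p.1 < s p.2 then y p.2 - y p.1 else 0
  have hloss : 1 - 12 * (n * (n + 1) * (2 * n + 1) / 6 - D - n * (((n : ℝ) + 1) / 2) ^ 2)
      / (n * ((n : ℝ) ^ 2 - 1)) = 12 / (n * ((n : ℝ) ^ 2 - 1)) * D := by
    field_simp [hn1.ne']
    ring
  rw [hloss]
  refine mul_le_mul_of_nonneg_left (sum_le_sum fun p hp => ?_)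
    (div_nonneg (by norm_num) (mul_nonneg n.cast_nonneg hn1.le))
  exact ite_le_mul_logb_one_add_exp hσ.le (sub_nonneg.2 (mem_filter.1 hp).2.le) _ _
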